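/- arXiv:2108.10466 — 4 statements merged into one kernel-verified Lean document; each statement's English description precedes it below -/
import Mathlib

section
/- Let $r \geq 3$ be odd, $q = e^{2\pi i/r}$, and let $n_r = (r-1)/2$ if $r \equiv 1 \pmod 4$ and $n_r = (r-3)/2$ if $r \equiv 3 \pmod 4$. Suppose $m_1, m_2, m_3, m_4 \in I_r$ are such that the 6-tuple $(n_r, m_1, m_2, n_r, m_3, m_4)$ is $r$-admissible. Then the quantum 6j-symbol $\left|\begin{smallmatrix} n_r & m_1 & m_2 \\ n_r & m_3 & m_4 \end{smallmatrix}\right|$ (a priori a complex number) is real-valued. -/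
/-!
At `q = exp(2πi/r)` the quantum integer `[k]` equals the real number `sin(2πk/r) / sin(2π/r)`,
which is positive for `0 < 2k < r` and negative for `r < 2k < 2r`. So all quantum factorials are
real, and for odd `r` and `N < r` the sign of `[N]!` is `(-1)^(N - r/2)`. Hence the sum in the
6j-symbol is real, and so is the prefactor `i^(-Σ aᵢ)`, since `Σ aᵢ` is even.

The product `w` of the four `Δ`s satisfies `w² = ∏ Δ²`, a real number, and `w` is real as soon as
`w² ≥ 0`. Because `n_r` lies within `1` of `r/2` and occurs in every admissible triple, the three
factorials in the numerator of each `Δ²` have index below `r/2`, hence are positive, while the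
signs of the four denominators `[Tᵢ + 1]!` multiply to `1`.
-/

open scoped Real
open Complex Finset

noncomputable section

/-- The quantum integer `[n]` at `q = exp(2πi/r)`. -/
def qint (r : ℕ) (n : ℤ) : ℂ :=
  (Complex.exp (2 * Real.pi * Complex.I / r) ^ n -
    Complex.exp (2 * Real.pi * Complex.I / r) ^ (-n)) /
  (Complex.exp (2 * Real.pi * Complex.I / r) -
    (Complex.exp (2 * Real.pi * Complex.I / r))⁻¹)

/-- The quantum factorial `[N]! = ∏_{k=1}^N [k]`, with `[0]! = 1`. -/
def qfact (r N : ℕ) : ℂ := ∏ k ∈ Finset.Icc 1 N, qint r (k : ℤ)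

/-- A triple `(a₁,a₂,a₃)` of elements of `I_r = {0,…,r-2}` is `r`-admissible. -/
def AdmissibleTriple (r a₁ a₂ a₃ : ℕ) : Prop :=
  a₁ ≤ r - 2 ∧ a₂ ≤ r - 2 ∧ a₃ ≤ r - 2 ∧
  Even (a₁ + a₂ + a₃) ∧
  a₁ + a₂ + a₃ ≤ 2 * (r - 2) ∧
  a₃ ≤ a₁ + a₂ ∧ a₂ ≤ a₁ + a₃ ∧ a₁ ≤ a₂ + a₃

/-- A 6-tuple `(a₁,…,a₆)` is `r`-admissible. -/
def Admissible6 (r a₁ a₂ a₃ a₄ a₅ a₆ : ℕ) : Prop :=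
  AdmissibleTriple r a₁ a₂ a₃ ∧ AdmissibleTriple r a₁ a₅ a₆ ∧
  AdmissibleTriple r a₂ a₄ a₆ ∧ AdmissibleTriple r a₃ a₄ a₅

/-- `Δ(a₁,a₂,a₃)`, using the principal complex square root, which realizes the
convention `√y = i√|y|` for negative real `y`. -/
def qdelta (r a₁ a₂ a₃ : ℕ) : ℂ :=
  (qfact r ((a₁ + a₂ - a₃) / 2) * qfact r ((a₁ + a₃ - a₂) / 2) *
      qfact r ((a₂ + a₃ - a₁) / 2) / qfact r ((a₁ + a₂ + a₃) / 2 + 1)) ^ (1 / 2 : ℂ)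

/-- The quantum 6j-symbol `|a₁ a₂ a₃; a₄ a₅ a₆|` at `q = exp(2πi/r)`. -/
def sixj (r a₁ a₂ a₃ a₄ a₅ a₆ : ℕ) : ℂ :=
  Complex.I ^ (-(a₁ + a₂ + a₃ + a₄ + a₅ + a₆ : ℤ)) *
    qdelta r a₁ a₂ a₃ * qdelta r a₁ a₅ a₆ * qdelta r a₂ a₄ a₆ * qdelta r a₃ a₄ a₅ *
    ∑ k ∈ Finset.Icc
        (max (max ((a₁ + a₂ + a₃) / 2) ((a₁ + a₅ + a₆) / 2))
             (max ((a₂ + a₄ + a₆) / 2) ((a₃ + a₄ + a₅) / 2)))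
        (min ((a₁ + a₂ + a₄ + a₅) / 2)
             (min ((a₁ + a₃ + a₄ + a₆) / 2) ((a₂ + a₃ + a₅ + a₆) / 2))),
      ((-1 : ℂ) ^ k * qfact r (k + 1)) /
        (qfact r (k - (a₁ + a₂ + a₃) / 2) * qfact r (k - (a₁ + a₅ + a₆) / 2) *
         qfact r (k - (a₂ + a₄ + a₆) / 2) * qfact r (k - (a₃ + a₄ + a₅) / 2) *
         qfact r ((a₁ + a₂ + a₄ + a₅) / 2 - k) * qfact r ((a₁ + a₃ + a₄ + a₆) / 2 - k) *
         qfact r ((a₂ + a₃ + a₅ + a₆) / 2 - k))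

/-- `n_r = (r-1)/2` if `r ≡ 1 mod 4`, and `n_r = (r-3)/2` if `r ≡ 3 mod 4`. -/
def nr (r : ℕ) : ℕ := if r % 4 = 1 then (r - 1) / 2 else (r - 3) / 2

open ComplexConjugate

def qintReal (r : ℕ) (n : ℤ) : ℝ := Real.sin (2 * π * n / r) / Real.sin (2 * π / r)

def qfactReal (r N : ℕ) : ℝ := ∏ k ∈ Icc 1 N, qintReal r k

lemma exp_mul_I_sub_inv (x : ℝ) : exp (x * I) - (exp (x * I))⁻¹ = 2 * I * Real.sin x := by
  rw [← Complex.exp_neg, Complex.ofReal_sin, Complex.sin, neg_mul]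
  ring_nf
  rw [I_sq]
  ring

lemma qint_eq_ofReal (r : ℕ) (n : ℤ) : qint r n = qintReal r n := by
  have hq : ∀ m : ℤ, exp (2 * π * I / r) ^ m = exp ((2 * π * m / r : ℝ) * I) := fun m => by
    rw [← Complex.exp_int_mul]
    push_cast
    ring_nf
  have hq₁ : exp (2 * π * I / r) = exp ((2 * π / r : ℝ) * I) := by
    simpa using hq 1
  unfold qint qintReal
  rw [zpow_neg, hq, hq₁, exp_mul_I_sub_inv, exp_mul_I_sub_inv,
    mul_div_mul_left _ _ (mul_ne_zero two_ne_zero I_ne_zero), ofReal_div]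

lemma qfact_eq_ofReal (r N : ℕ) : qfact r N = qfactReal r N := by
  rw [qfact, qfactReal, ofReal_prod]
  exact prod_congr rfl fun k _ => qint_eq_ofReal r k

lemma conj_qfact (r N : ℕ) : conj (qfact r N) = qfact r N := by
  rw [qfact_eq_ofReal, conj_ofReal]

def qdeltaSqReal (r a b c : ℕ) : ℝ :=
  qfactReal r ((a + b - c) / 2) * qfactReal r ((a + c - b) / 2) * qfactReal r ((b + c - a) / 2) /
    qfactReal r ((a + b + c) / 2 + 1)

lemma qdelta_sq (r a b c : ℕ) : qdelta r a b c ^ 2 = qdeltaSqReal r a b c := by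
  rw [qdelta, one_div, Complex.cpow_ofNat_inv_pow, qdeltaSqReal]
  simp only [qfact_eq_ofReal]
  push_cast
  rfl

lemma im_eq_zero_of_sq_eq_ofReal_nonneg {z : ℂ} {x : ℝ} (h : z ^ 2 = x) (hx : 0 ≤ x) :
    z.im = 0 := by
  have hre := congrArg re h
  have him := congrArg im h
  simp only [sq, mul_re, mul_im, ofReal_re, ofReal_im] at hre him
  rcases mul_eq_zero.mp (show z.re * z.im = 0 by linarith) with h₀ | h₀
  · rw [h₀] at hre
    nlinarith
  · exact h₀

lemma sixj_im_eq_zero_of_qdelta_prod {r a₁ a₂ a₃ a₄ a₅ a₆ : ℕ}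
    (hΔ : (qdelta r a₁ a₂ a₃ * qdelta r a₁ a₅ a₆ * qdelta r a₂ a₄ a₆ * qdelta r a₃ a₄ a₅).im = 0)
    (heven : Even (a₁ + a₂ + a₃ + a₄ + a₅ + a₆)) : (sixj r a₁ a₂ a₃ a₄ a₅ a₆).im = 0 := by
  have hI : conj (I ^ (-(a₁ + a₂ + a₃ + a₄ + a₅ + a₆ : ℤ))) =
      I ^ (-(a₁ + a₂ + a₃ + a₄ + a₅ + a₆ : ℤ)) := by
    rw [map_zpow₀, conj_I, Even.neg_zpow]
    exact even_neg.mpr (by exact_mod_cast heven)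
  rw [← conj_eq_iff_im] at hΔ ⊢
  unfold sixj
  simp only [map_mul, map_sum, map_div₀, map_pow, map_neg, map_one, conj_qfact, hI] at hΔ ⊢
  congr 1
  linear_combination I ^ (-(a₁ + a₂ + a₃ + a₄ + a₅ + a₆ : ℤ)) * hΔ

lemma sin_two_pi_mul_div_pos {r k : ℕ} (hk : 0 < k) (hkr : 2 * k < r) :
    0 < Real.sin (2 * π * k / r) := by
  have hr : (0 : ℝ) < r := Nat.cast_pos.mpr (by omega)
  have hkr' : (2 * k : ℝ) < r := by exact_mod_cast hkr
  refine Real.sin_pos_of_pos_of_lt_pi (by positivity) ?_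
  rw [div_lt_iff₀ hr]
  nlinarith [Real.pi_pos]

lemma sin_two_pi_mul_div_neg {r k : ℕ} (hkr : r < 2 * k) (hk : k < r) :
    Real.sin (2 * π * k / r) < 0 := by
  have hr : (0 : ℝ) < r := Nat.cast_pos.mpr (by omega)
  have hk' : (k : ℝ) < r := by exact_mod_cast hk
  have hkr' : (r : ℝ) < 2 * k := by exact_mod_cast hkr
  rw [← Real.sin_sub_two_pi]
  apply Real.sin_neg_of_neg_of_neg_pi_lt
  · rw [sub_neg, div_lt_iff₀ hr]
    nlinarith [Real.pi_pos]
  · rw [lt_sub_iff_add_lt, lt_div_iff₀ hr]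
    nlinarith [Real.pi_pos]

lemma sin_two_pi_div_pos {r : ℕ} (hr : 2 < r) : 0 < Real.sin (2 * π / r) := by
  simpa using sin_two_pi_mul_div_pos (r := r) one_pos hr

lemma qintReal_pos {r k : ℕ} (hk : 0 < k) (hkr : 2 * k < r) : 0 < qintReal r k := by
  rw [qintReal, Int.cast_natCast]
  exact div_pos (sin_two_pi_mul_div_pos hk hkr) (sin_two_pi_div_pos (by omega))

lemma qintReal_neg {r k : ℕ} (hkr : r < 2 * k) (hk : k < r) : qintReal r k < 0 := by
  rw [qintReal, Int.cast_natCast]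
  exact div_neg_of_neg_of_pos (sin_two_pi_mul_div_neg hkr hk) (sin_two_pi_div_pos (by omega))

lemma qfactReal_pos {r N : ℕ} (hN : 2 * N < r) : 0 < qfactReal r N :=
  prod_pos fun k hk => qintReal_pos (mem_Icc.mp hk).1 (by linarith [(mem_Icc.mp hk).2])

lemma qfactReal_succ (r N : ℕ) : qfactReal r (N + 1) = qfactReal r N * qintReal r (N + 1) := by
  rw [qfactReal, prod_Icc_succ_top (by omega), ← qfactReal, Nat.cast_succ]

lemma neg_one_pow_mul_qfactReal_pos {r N : ℕ} (hodd : Odd r) (hN : N < r) :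
    0 < (-1) ^ (N - r / 2) * qfactReal r N := by
  induction N with
  | zero => simp [qfactReal]
  | succ N ih =>
    obtain ⟨t, rfl⟩ := hodd
    by_cases hsmall : N + 1 ≤ (2 * t + 1) / 2
    · rw [Nat.sub_eq_zero_of_le hsmall, pow_zero, one_mul]
      exact qfactReal_pos (by omega)
    · rw [Nat.sub_add_comm (by omega), pow_succ, qfactReal_succ]
      have hneg := qintReal_neg (r := 2 * t + 1) (k := N + 1) (by omega) hN
      push_cast at hneg
      nlinarith [ih (by omega)]

lemma neg_one_pow_add_mul_pos {x y : ℝ} {i j : ℕ} (hx : 0 < (-1) ^ i * x) (hy : 0 < (-1) ^ j * y) :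
    0 < (-1) ^ (i + j) * (x * y) := by
  rw [pow_add, mul_mul_mul_comm]
  exact mul_pos hx hy

lemma neg_one_pow_mul_div_pos {x y : ℝ} {e : ℕ} (hx : 0 < x) (hy : 0 < (-1) ^ e * y) :
    0 < (-1) ^ e * (x / y) := by
  rcases neg_one_pow_eq_or ℝ e with h | h <;> rw [h] at hy ⊢
  · rw [one_mul] at hy ⊢
    exact div_pos hx hy
  · rw [neg_one_mul, neg_pos] at hy ⊢
    exact div_neg_of_pos_of_neg hx (by linarith)

lemma neg_one_pow_mul_qdeltaSqReal_pos {r a b c : ℕ} (hodd : Odd r) (hab : a + b < c + r)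
    (hac : a + c < b + r) (hbc : b + c < a + r) (habc : a + b + c + 2 < 2 * r) :
    0 < (-1) ^ ((a + b + c) / 2 + 1 - r / 2) * qdeltaSqReal r a b c := by
  have hnum := mul_pos (mul_pos (qfactReal_pos (r := r) (N := (a + b - c) / 2) (by omega))
    (qfactReal_pos (r := r) (N := (a + c - b) / 2) (by omega)))
    (qfactReal_pos (r := r) (N := (b + c - a) / 2) (by omega))
  have hden := neg_one_pow_mul_qfactReal_pos (N := (a + b + c) / 2 + 1) hodd (by omega)
  exact neg_one_pow_mul_div_pos hnum hden

lemma nr_bounds {r : ℕ} (hodd : Odd r) : r ≤ 2 * nr r + 3 ∧ 2 * nr r < r := by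
  obtain ⟨t, rfl⟩ := hodd
  unfold nr
  split_ifs <;> omega

theorem real_sixj_nr (r : ℕ) (hr : 3 ≤ r) (hodd : Odd r) (m₁ m₂ m₃ m₄ : ℕ)
    (hadm : Admissible6 r (nr r) m₁ m₂ (nr r) m₃ m₄) :
    (sixj r (nr r) m₁ m₂ (nr r) m₃ m₄).im = 0 := by
  obtain ⟨hn, hn'⟩ := nr_bounds hodd
  obtain ⟨⟨-, -, -, hp₁, hs₁, ht₁, ht₁', ht₁''⟩, ⟨-, -, -, hp₂, hs₂, ht₂, ht₂', ht₂''⟩,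
    ⟨-, -, -, hp₃, hs₃, ht₃, ht₃', ht₃''⟩, ⟨-, -, -, hp₄, hs₄, ht₄, ht₄', ht₄''⟩⟩ := hadm
  rw [Nat.even_iff] at hp₁ hp₂ hp₃ hp₄
  have hpos := neg_one_pow_add_mul_pos (neg_one_pow_add_mul_pos (neg_one_pow_add_mul_pos
    (neg_one_pow_mul_qdeltaSqReal_pos (a := nr r) (b := m₁) (c := m₂) hodd
      (by omega) (by omega) (by omega) (by omega))
    (neg_one_pow_mul_qdeltaSqReal_pos (a := nr r) (b := m₃) (c := m₄) hodd
      (by omega) (by omega) (by omega) (by omega)))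
    (neg_one_pow_mul_qdeltaSqReal_pos (a := m₁) (b := nr r) (c := m₄) hodd
      (by omega) (by omega) (by omega) (by omega)))
    (neg_one_pow_mul_qdeltaSqReal_pos (a := m₂) (b := nr r) (c := m₃) hodd
      (by omega) (by omega) (by omega) (by omega))
  rw [Even.neg_one_pow (Nat.even_iff.mpr (by omega)), one_mul] at hpos
  refine sixj_im_eq_zero_of_qdelta_prod (im_eq_zero_of_sq_eq_ofReal_nonneg ?_ hpos.le)
    (Nat.even_iff.mpr (by omega))
  rw [mul_pow, mul_pow, mul_pow, qdelta_sq, qdelta_sq, qdelta_sq, qdelta_sq]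
  push_cast
  rfl
end
end

section
/- Let $r \geq 3$ be odd, $q = e^{2\pi i/r}$, and let $n_r = (r-1)/2$ if $r \equiv 1 \pmod 4$ and $n_r = (r-3)/2$ if $r \equiv 3 \pmod 4$. Let $k$ be an even natural number and $l$ any natural number. For each $i \in \{1,\dots,k\}$ let $m^i \in I_r$ be such that $(n_r, m^i, m^i, n_r, m^i, m^i)$ is $r$-admissible, and for each $j \in \{1,\dots,l\}$ let $m_1^j, m_2^j, m_3^j, m_4^j \in I_r$ be such that $(n_r, m_1^j, m_2^j, n_r, m_3^j, m_4^j)$ is $r$-admissible. Then the product $\prod_{i=1}^k \left|\begin{smallmatrix} n_r & m^i & m^i \\ n_r & m^i & m^i \end{smallmatrix}\right| \cdot \prod_{j=1}^l \left|\begin{smallmatrix} n_r & m_1^j & m_2^j \\ n_r & m_3^j & m_4^j \end{smallmatrix}\right|^2$ is a nonnegative real number. -/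
open scoped Real
open Complex Finset

noncomputable section

namespace SSum

/-- real model of `[j]` -/
noncomputable def s (r j : ℕ) : ℝ := Real.sin (2*Real.pi*j/r) / Real.sin (2*Real.pi/r)

/-- real model of `[N]!` -/
noncomputable def F (r N : ℕ) : ℝ := ∏ k ∈ Finset.Icc 1 N, s r k

lemma exp_sub_exp (x : ℝ) :
    Complex.exp (↑x * Complex.I) - Complex.exp (↑(-x) * Complex.I)
      = 2 * Complex.sin ↑x * Complex.I := by
  push_cast
  rw [Complex.exp_mul_I, Complex.exp_mul_I, Complex.cos_neg, Complex.sin_neg]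
  ring

lemma qint_eq (r j : ℕ) : qint r (j : ℤ) = ((s r j : ℝ) : ℂ) := by
  have hE : (2 * (Real.pi:ℂ) * Complex.I / (r:ℂ)) = ((2*Real.pi/r : ℝ):ℂ) * Complex.I := by
    push_cast; ring
  set θ : ℝ := 2*Real.pi/r with hθ
  have h1 : Complex.exp (2 * (Real.pi:ℂ) * Complex.I / (r:ℂ)) ^ (j:ℤ)
      = Complex.exp (↑(j*θ) * Complex.I) := by
    rw [hE, ← Complex.exp_int_mul]
    congr 1; push_cast; ring
  have h2 : Complex.exp (2 * (Real.pi:ℂ) * Complex.I / (r:ℂ)) ^ (-(j:ℤ))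
      = Complex.exp (↑(-(j*θ)) * Complex.I) := by
    rw [hE, ← Complex.exp_int_mul]
    congr 1; push_cast; ring
  have h3 : (Complex.exp (2 * (Real.pi:ℂ) * Complex.I / (r:ℂ)))⁻¹
      = Complex.exp (↑(-θ) * Complex.I) := by
    rw [hE, ← Complex.exp_neg]
    congr 1; push_cast; ring
  have h4 : Complex.exp (2 * (Real.pi:ℂ) * Complex.I / (r:ℂ))
      = Complex.exp (↑θ * Complex.I) := by rw [hE]
  rw [qint, h1, h2, h3]
  conv_lhs => rw [h4]
  rw [exp_sub_exp, exp_sub_exp]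
  have h2I : (2 : ℂ) * Complex.I ≠ 0 := by
    simp [Complex.I_ne_zero]
  have hcan : ∀ z w : ℂ, (2*z*Complex.I)/(2*w*Complex.I) = z / w := by
    intro z w
    rw [mul_comm 2 z, mul_comm 2 w, mul_assoc, mul_assoc,
      mul_div_mul_right _ _ h2I]
  rw [hcan, ← Complex.ofReal_sin, ← Complex.ofReal_sin, ← Complex.ofReal_div]
  norm_cast
  rw [s, hθ]
  ring_nf

lemma qfact_eq (r N : ℕ) : qfact r N = ((F r N : ℝ) : ℂ) := by
  rw [qfact, F, Complex.ofReal_prod]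
  exact Finset.prod_congr rfl fun k _ => qint_eq r k

lemma cpow_half_sq (z : ℂ) : (z ^ (1/2 : ℂ))^2 = z := by
  by_cases hz : z = 0
  · rw [hz, Complex.zero_cpow (by norm_num)]; norm_num
  · rw [sq, ← Complex.cpow_add _ _ hz]
    norm_num

/-- real model of the radicand of `Δ` -/
noncomputable def radR (r a b c : ℕ) : ℝ :=
  F r ((a+b-c)/2) * F r ((a+c-b)/2) * F r ((b+c-a)/2) / F r ((a+b+c)/2+1)

lemma qdelta_sq (r a b c : ℕ) : (qdelta r a b c)^2 = ((radR r a b c : ℝ) : ℂ) := by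
  rw [qdelta, cpow_half_sq, radR]
  rw [qfact_eq, qfact_eq, qfact_eq, qfact_eq]
  push_cast
  ring

lemma base_pos (r : ℕ) (hr : 3 ≤ r) : 0 < Real.sin (2*Real.pi/r) := by
  have hrp : (0:ℝ) < r := by positivity
  apply Real.sin_pos_of_pos_of_lt_pi
  · positivity
  · rw [div_lt_iff₀ hrp]
    have : (3:ℝ) ≤ r := by exact_mod_cast hr
    nlinarith [Real.pi_pos]

lemma s_pos (r : ℕ) (hr : 3 ≤ r) (j : ℕ) (h1 : 1 ≤ j) (h2 : 2*j < r) :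
    0 < s r j := by
  have hrp : (0:ℝ) < r := by positivity
  have hj : (0:ℝ) < j := by exact_mod_cast h1
  have h2' : (2*j:ℝ) < r := by exact_mod_cast h2
  apply div_pos _ (base_pos r hr)
  apply Real.sin_pos_of_pos_of_lt_pi
  · positivity
  · rw [div_lt_iff₀ hrp]; nlinarith [Real.pi_pos]

lemma s_neg (r : ℕ) (hr : 3 ≤ r) (j : ℕ) (h1 : r < 2*j) (h2 : j < r) :
    s r j < 0 := by
  have hrp : (0:ℝ) < r := by positivity
  have h1' : (r:ℝ) < 2*j := by exact_mod_cast h1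
  have h2' : (j:ℝ) < r := by exact_mod_cast h2
  apply div_neg_of_neg_of_pos _ (base_pos r hr)
  have hx1 : Real.pi < 2*Real.pi*j/r := by
    rw [lt_div_iff₀ hrp]; nlinarith [Real.pi_pos]
  have hx2 : 2*Real.pi*j/r < 2*Real.pi := by
    rw [div_lt_iff₀ hrp]; nlinarith [Real.pi_pos]
  have key : Real.sin (2*Real.pi*j/r - Real.pi) = -Real.sin (2*Real.pi*j/r) :=
    Real.sin_sub_pi _
  have hpos : 0 < Real.sin (2*Real.pi*j/r - Real.pi) := by
    apply Real.sin_pos_of_pos_of_lt_pi <;> [linarith; linarith]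
  linarith

lemma s_r_zero (r : ℕ) (hr : 3 ≤ r) : s r r = 0 := by
  have hrp : (r:ℝ) ≠ 0 := by positivity
  rw [s]
  have : 2*Real.pi*r/r = 2*Real.pi := by field_simp
  rw [this, Real.sin_two_pi, zero_div]

lemma F_succ (r N : ℕ) : F r (N+1) = F r N * s r (N+1) := by
  rw [F, F, ← Finset.prod_Icc_succ_top (by omega : 1 ≤ N+1)]

lemma F_zero_def (r : ℕ) : F r 0 = 1 := by
  rw [F]; simp

lemma F_pos (r : ℕ) (hr : 3 ≤ r) (hodd : r % 2 = 1) :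
    ∀ N, 2*N < r → 0 < F r N := by
  intro N
  induction N with
  | zero => intro _; rw [F_zero_def]; norm_num
  | succ M ih =>
    intro h
    rw [F_succ]
    exact mul_pos (ih (by omega)) (s_pos r hr (M+1) (by omega) (by omega))

lemma F_sign (r : ℕ) (hr : 3 ≤ r) (hodd : r % 2 = 1) :
    ∀ N, (r-1)/2 ≤ N → N ≤ r-1 → 0 < (-1:ℝ)^(N - (r-1)/2) * F r N := by
  intro N
  induction N with
  | zero => intro h1 _; exfalso; omega
  | succ M ih =>
    intro h1 h2
    rcases Nat.lt_or_ge M ((r-1)/2) with hM | hM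
    · have hMe : M + 1 = (r-1)/2 := by omega
      rw [hMe, Nat.sub_self, pow_zero, one_mul, ← hMe]
      rw [F_succ]
      exact mul_pos (F_pos r hr hodd M (by omega)) (s_pos r hr (M+1) (by omega) (by omega))
    · have hIH := ih hM (by omega)
      have hs : s r (M+1) < 0 := s_neg r hr (M+1) (by omega) (by omega)
      have he : M + 1 - (r-1)/2 = (M - (r-1)/2) + 1 := by omega
      rw [he, pow_succ, F_succ]
      nlinarith [mul_pos hIH (neg_pos.mpr hs)]

lemma F_ne (r : ℕ) (hr : 3 ≤ r) (hodd : r % 2 = 1) (N : ℕ) (h : N ≤ r-1) :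
    F r N ≠ 0 := by
  rcases Nat.lt_or_ge (2*N) r with h1 | h1
  · exact (F_pos r hr hodd N h1).ne'
  · have := F_sign r hr hodd N (by omega) h
    intro h0; rw [h0] at this; simp at this

lemma F_null (r : ℕ) (hr : 3 ≤ r) (N : ℕ) (h : r ≤ N) : F r N = 0 := by
  rw [F]
  exact Finset.prod_eq_zero (Finset.mem_Icc.mpr ⟨by omega, h⟩) (s_r_zero r hr)

lemma neg_one_pow_congr (p q : ℕ) (h : p % 2 = q % 2) : ((-1:ℝ))^p = (-1)^q := by
  rcases Nat.even_or_odd p with hp | hp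
  · have hp' := Nat.even_iff.mp hp
    rw [hp.neg_one_pow, (Nat.even_iff.mpr (by omega)).neg_one_pow]
  · have hp' := Nat.odd_iff.mp hp
    rw [hp.neg_one_pow, (Nat.odd_iff.mpr (by omega)).neg_one_pow]

lemma I_zpow_four_mul (t : ℤ) : Complex.I ^ (4*t) = 1 := by
  rw [zpow_mul]
  rw [show (4:ℤ) = ((4:ℕ):ℤ) from rfl, zpow_natCast, Complex.I_pow_four, one_zpow]

lemma I_phase (c : ℕ) (h : c % 4 = 0) : Complex.I ^ (-(c:ℤ)) = 1 := by
  have : (-(c:ℤ)) = 4 * (-((c/4 : ℕ) : ℤ)) := by omega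
  rw [this, I_zpow_four_mul]

lemma I_phase_sq (c : ℕ) (h : c % 2 = 0) : (Complex.I ^ (-(c:ℤ)))^2 = 1 := by
  rw [sq, ← zpow_add₀ Complex.I_ne_zero]
  have : (-(c:ℤ)) + (-(c:ℤ)) = 4 * (-((c/2 : ℕ) : ℤ)) := by omega
  rw [this, I_zpow_four_mul]

lemma rad_sign (r : ℕ) (hr : 3 ≤ r) (hodd : r % 2 = 1) (a b c : ℕ)
    (ha : a+b-c ≤ r-1) (hb : a+c-b ≤ r-1) (hc : b+c-a ≤ r-1)
    (hT : (r-1)/2 ≤ (a+b+c)/2 + 1) (hT2 : (a+b+c)/2 + 1 ≤ r-1) :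
    0 < (-1:ℝ)^((a+b+c)/2+1-(r-1)/2) * radR r a b c := by
  have p1 : 0 < F r ((a+b-c)/2) := F_pos r hr hodd _ (by omega)
  have p2 : 0 < F r ((a+c-b)/2) := F_pos r hr hodd _ (by omega)
  have p3 : 0 < F r ((b+c-a)/2) := F_pos r hr hodd _ (by omega)
  have hd := F_sign r hr hodd ((a+b+c)/2+1) hT hT2
  have hd0 : F r ((a+b+c)/2+1) ≠ 0 := F_ne r hr hodd _ hT2
  rw [radR]
  have key : (-1:ℝ)^((a+b+c)/2+1-(r-1)/2) *
      (F r ((a+b-c)/2) * F r ((a+c-b)/2) * F r ((b+c-a)/2) / F r ((a+b+c)/2+1))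
    = (F r ((a+b-c)/2) * F r ((a+c-b)/2) * F r ((b+c-a)/2)) *
        ((-1:ℝ)^((a+b+c)/2+1-(r-1)/2) * F r ((a+b+c)/2+1)) /
        (F r ((a+b+c)/2+1) * F r ((a+b+c)/2+1)) := by
    field_simp
  rw [key]
  exact div_pos (mul_pos (mul_pos (mul_pos p1 p2) p3) hd) (mul_self_pos.mpr hd0)

/-- real model of the state-sum general summand -/
noncomputable def gR (r T₁ T₂ T₃ T₄ Q₁ Q₂ Q₃ k : ℕ) : ℝ :=
  ((-1)^k * F r (k+1)) /
    (F r (k-T₁) * F r (k-T₂) * F r (k-T₃) * F r (k-T₄) *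
     F r (Q₁-k) * F r (Q₂-k) * F r (Q₃-k))

lemma summand_eq (r T₁ T₂ T₃ T₄ Q₁ Q₂ Q₃ k : ℕ) :
    ((-1:ℂ)^k * qfact r (k+1)) /
      (qfact r (k-T₁) * qfact r (k-T₂) * qfact r (k-T₃) * qfact r (k-T₄) *
       qfact r (Q₁-k) * qfact r (Q₂-k) * qfact r (Q₃-k))
    = ((gR r T₁ T₂ T₃ T₄ Q₁ Q₂ Q₃ k : ℝ) : ℂ) := by
  rw [gR, qfact_eq, qfact_eq, qfact_eq, qfact_eq, qfact_eq, qfact_eq, qfact_eq, qfact_eq]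
  push_cast
  ring

lemma sum_eq (r T₁ T₂ T₃ T₄ Q₁ Q₂ Q₃ lo hi : ℕ) :
    (∑ k ∈ Finset.Icc lo hi,
      ((-1:ℂ)^k * qfact r (k+1)) /
        (qfact r (k-T₁) * qfact r (k-T₂) * qfact r (k-T₃) * qfact r (k-T₄) *
         qfact r (Q₁-k) * qfact r (Q₂-k) * qfact r (Q₃-k)))
    = (((∑ k ∈ Finset.Icc lo hi, gR r T₁ T₂ T₃ T₄ Q₁ Q₂ Q₃ k : ℝ)) : ℂ) := by
  rw [Complex.ofReal_sum]
  exact Finset.sum_congr rfl fun k _ => summand_eq r T₁ T₂ T₃ T₄ Q₁ Q₂ Q₃ k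

lemma nr_facts (r : ℕ) (hr : 3 ≤ r) (hodd : r % 2 = 1) :
    nr r % 2 = 0 ∧ (r-1)/2 - 1 ≤ nr r ∧ nr r ≤ (r-1)/2 := by
  unfold nr; split <;> omega

lemma S_form (r : ℕ) (hr : 3 ≤ r) (hodd : Odd r) (m : ℕ)
    (hS : Admissible6 r (nr r) m m (nr r) m m) :
    ∃ w : ℝ, sixj r (nr r) m m (nr r) m m = ((w:ℝ):ℂ) ∧
      0 ≤ (-1:ℝ)^((r-1)/2+1) * w := by
  have ho : r % 2 = 1 := Nat.odd_iff.mp hodd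
  obtain ⟨hn0, hn1, hn2⟩ := nr_facts r hr ho
  set n := nr r with hn
  obtain ⟨hA1, hA2, hA3, hA4⟩ := hS
  obtain ⟨hb1, hb2, hb3, hb4, hb5, hb6, hb7, hb8⟩ := hA1
  rw [Nat.even_iff] at hb4
  rw [sixj]
  have halg : ∀ p d₁ d₂ S : ℂ, p * d₁ * d₁ * d₂ * d₂ * S = p * d₁^2 * d₂^2 * S := by
    intros; ring
  rw [halg]
  have hc : (-(↑n + ↑m + ↑m + ↑n + ↑m + ↑m : ℤ)) = -(((n+m+m+n+m+m : ℕ)) : ℤ) := by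
    push_cast; ring
  rw [hc, I_phase _ (by omega), one_mul]
  rw [qdelta_sq, qdelta_sq]
  rw [sum_eq]
  set σ := ∑ k ∈ Finset.Icc
      (max (max ((n+m+m)/2) ((n+m+m)/2)) (max ((m+n+m)/2) ((m+n+m)/2)))
      (min ((n+m+n+m)/2) (min ((n+m+n+m)/2) ((m+m+m+m)/2))),
    gR r ((n+m+m)/2) ((n+m+m)/2) ((m+n+m)/2) ((m+n+m)/2)
      ((n+m+n+m)/2) ((n+m+n+m)/2) ((m+m+m+m)/2) k with hσ
  refine ⟨radR r n m m * radR r m n m * σ, by push_cast; ring, ?_⟩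
  have hR : radR r m n m = radR r n m m := by
    rw [radR, radR, show m+n-m = n+m-m from by omega, show m+n+m = n+m+m from by omega]
    ring
  rw [hR]
  have hσn : 0 ≤ (-1:ℝ)^((r-1)/2+1) * σ := by
    rw [hσ, Finset.mul_sum]
    apply Finset.sum_nonneg
    intro k hk
    rw [Finset.mem_Icc] at hk
    obtain ⟨hk1, hk2⟩ := hk
    have hkT : (n+m+m)/2 ≤ k := by omega
    have hkb : k ≤ (n+m+n+m)/2 := by omega
    have hkc : k ≤ (m+m+m+m)/2 := by omega
    rw [gR]
    rw [show k - (m+n+m)/2 = k - (n+m+m)/2 from by omega,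
        show (n+m+n+m)/2 - k = n+m-k from by omega,
        show (m+m+m+m)/2 - k = 2*m-k from by omega]
    rcases Nat.lt_or_ge (r-2) k with hk4 | hk4
    · rw [F_null r hr (k+1) (by omega)]
      simp
    · have hFa : F r (k - (n+m+m)/2) ≠ 0 := F_ne r hr ho _ (by omega)
      have hFb : F r (n+m-k) ≠ 0 := F_ne r hr ho _ (by omega)
      have hFc : 0 < F r (2*m-k) := F_pos r hr ho _ (by omega)
      have hnum : 0 < (-1:ℝ)^((r-1)/2+1) * ((-1)^k * F r (k+1)) := by
        have hFs := F_sign r hr ho (k+1) (by omega) (by omega)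
        rw [← mul_assoc, ← pow_add,
          neg_one_pow_congr ((r-1)/2+1+k) (k+1-(r-1)/2) (by omega)]
        exact hFs
      have hden : 0 < F r (k-(n+m+m)/2) * F r (k-(n+m+m)/2) * F r (k-(n+m+m)/2) *
          F r (k-(n+m+m)/2) * F r (n+m-k) * F r (n+m-k) * F r (2*m-k) := by
        have h1 : 0 < F r (k-(n+m+m)/2) * F r (k-(n+m+m)/2) := mul_self_pos.mpr hFa
        have h2 : 0 < F r (n+m-k) * F r (n+m-k) := mul_self_pos.mpr hFb
        nlinarith [mul_pos (mul_pos h1 h1) (mul_pos h2 hFc)]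
      rw [← mul_div_assoc]
      exact div_nonneg hnum.le hden.le
  nlinarith [mul_self_nonneg (radR r n m m), mul_nonneg (mul_self_nonneg (radR r n m m)) hσn]

lemma A_form (r : ℕ) (hr : 3 ≤ r) (hodd : Odd r) (m₁ m₂ m₃ m₄ : ℕ)
    (hA : Admissible6 r (nr r) m₁ m₂ (nr r) m₃ m₄) :
    ∃ v : ℝ, 0 ≤ v ∧ (sixj r (nr r) m₁ m₂ (nr r) m₃ m₄)^2 = ((v:ℝ):ℂ) := by
  have ho : r % 2 = 1 := Nat.odd_iff.mp hodd
  obtain ⟨hn0, hn1, hn2⟩ := nr_facts r hr ho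
  set n := nr r with hn
  obtain ⟨hA1, hA2, hA3, hA4⟩ := hA
  obtain ⟨ha1, ha2, ha3, ha4, ha5, ha6, ha7, ha8⟩ := hA1
  obtain ⟨hc1, hc2, hc3, hc4, hc5, hc6, hc7, hc8⟩ := hA2
  obtain ⟨hd1, hd2, hd3, hd4, hd5, hd6, hd7, hd8⟩ := hA3
  obtain ⟨he1, he2, he3, he4, he5, he6, he7, he8⟩ := hA4
  rw [Nat.even_iff] at ha4 hc4 hd4 he4
  rw [sixj]
  have halg : ∀ p d₁ d₂ d₃ d₄ S : ℂ,
      (p * d₁ * d₂ * d₃ * d₄ * S)^2 = p^2 * d₁^2 * d₂^2 * d₃^2 * d₄^2 * S^2 := by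
    intros; ring
  rw [halg]
  have hcc : (-(↑n + ↑m₁ + ↑m₂ + ↑n + ↑m₃ + ↑m₄ : ℤ)) = -(((n+m₁+m₂+n+m₃+m₄ : ℕ)) : ℤ) := by
    push_cast; ring
  rw [hcc, I_phase_sq _ (by omega), one_mul]
  rw [qdelta_sq, qdelta_sq, qdelta_sq, qdelta_sq]
  rw [sum_eq]
  set σ := ∑ k ∈ Finset.Icc
      (max (max ((n+m₁+m₂)/2) ((n+m₃+m₄)/2)) (max ((m₁+n+m₄)/2) ((m₂+n+m₃)/2)))
      (min ((n+m₁+n+m₃)/2) (min ((n+m₂+n+m₄)/2) ((m₁+m₂+m₃+m₄)/2))),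
    gR r ((n+m₁+m₂)/2) ((n+m₃+m₄)/2) ((m₁+n+m₄)/2) ((m₂+n+m₃)/2)
      ((n+m₁+n+m₃)/2) ((n+m₂+n+m₄)/2) ((m₁+m₂+m₃+m₄)/2) k with hσ
  refine ⟨radR r n m₁ m₂ * radR r n m₃ m₄ * radR r m₁ n m₄ * radR r m₂ n m₃ * σ^2,
    ?_, by push_cast; ring⟩
  have s₁ := rad_sign r hr ho n m₁ m₂ (by omega) (by omega) (by omega) (by omega) (by omega)
  have s₂ := rad_sign r hr ho n m₃ m₄ (by omega) (by omega) (by omega) (by omega) (by omega)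
  have s₃ := rad_sign r hr ho m₁ n m₄ (by omega) (by omega) (by omega) (by omega) (by omega)
  have s₄ := rad_sign r hr ho m₂ n m₃ (by omega) (by omega) (by omega) (by omega) (by omega)
  have hprod := mul_pos (mul_pos (mul_pos s₁ s₂) s₃) s₄
  have hre : ((-1:ℝ)^((n+m₁+m₂)/2+1-(r-1)/2) * radR r n m₁ m₂) *
      ((-1:ℝ)^((n+m₃+m₄)/2+1-(r-1)/2) * radR r n m₃ m₄) *
      ((-1:ℝ)^((m₁+n+m₄)/2+1-(r-1)/2) * radR r m₁ n m₄) *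
      ((-1:ℝ)^((m₂+n+m₃)/2+1-(r-1)/2) * radR r m₂ n m₃)
      = (-1:ℝ)^(((n+m₁+m₂)/2+1-(r-1)/2) + ((n+m₃+m₄)/2+1-(r-1)/2) +
          ((m₁+n+m₄)/2+1-(r-1)/2) + ((m₂+n+m₃)/2+1-(r-1)/2)) *
        (radR r n m₁ m₂ * radR r n m₃ m₄ * radR r m₁ n m₄ * radR r m₂ n m₃) := by
    rw [pow_add, pow_add, pow_add]; ring
  rw [hre] at hprod
  have heven : (-1:ℝ)^(((n+m₁+m₂)/2+1-(r-1)/2) + ((n+m₃+m₄)/2+1-(r-1)/2) +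
      ((m₁+n+m₄)/2+1-(r-1)/2) + ((m₂+n+m₃)/2+1-(r-1)/2)) = 1 :=
    Even.neg_one_pow (Nat.even_iff.mpr (by omega))
  rw [heven, one_mul] at hprod
  exact mul_nonneg hprod.le (sq_nonneg σ)

end SSum

theorem state_sum_summand_nonneg (r : ℕ) (hr : 3 ≤ r) (hodd : Odd r)
    (k l : ℕ) (hk : Even k)
    (m : Fin k → ℕ) (m₁ m₂ m₃ m₄ : Fin l → ℕ)
    (hS : ∀ i : Fin k, Admissible6 r (nr r) (m i) (m i) (nr r) (m i) (m i))
    (hA : ∀ j : Fin l, Admissible6 r (nr r) (m₁ j) (m₂ j) (nr r) (m₃ j) (m₄ j)) :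
    ((∏ i : Fin k, sixj r (nr r) (m i) (m i) (nr r) (m i) (m i)) *
        ∏ j : Fin l, (sixj r (nr r) (m₁ j) (m₂ j) (nr r) (m₃ j) (m₄ j)) ^ 2).im = 0 ∧
    0 ≤ ((∏ i : Fin k, sixj r (nr r) (m i) (m i) (nr r) (m i) (m i)) *
        ∏ j : Fin l, (sixj r (nr r) (m₁ j) (m₂ j) (nr r) (m₃ j) (m₄ j)) ^ 2).re := by
  choose w hw1 hw2 using fun i => SSum.S_form r hr hodd (m i) (hS i)
  choose v hv1 hv2 using fun j => SSum.A_form r hr hodd (m₁ j) (m₂ j) (m₃ j) (m₄ j) (hA j)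
  have e1 : (∏ i : Fin k, sixj r (nr r) (m i) (m i) (nr r) (m i) (m i))
      = (((∏ i : Fin k, w i : ℝ)) : ℂ) := by
    push_cast
    exact Finset.prod_congr rfl fun i _ => hw1 i
  have e2 : (∏ j : Fin l, (sixj r (nr r) (m₁ j) (m₂ j) (nr r) (m₃ j) (m₄ j)) ^ 2)
      = (((∏ j : Fin l, v j : ℝ)) : ℂ) := by
    push_cast
    exact Finset.prod_congr rfl fun j _ => hv2 j
  have hWnn : 0 ≤ ∏ i : Fin k, w i := by
    have hch : (∏ i : Fin k, w i) = ∏ i : Fin k, ((-1:ℝ)^((r-1)/2+1) * w i) := by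
      rw [Finset.prod_mul_distrib, Finset.prod_const, Finset.card_univ, Fintype.card_fin,
        ← pow_mul, Even.neg_one_pow (hk.mul_left _), one_mul]
    rw [hch]
    exact Finset.prod_nonneg fun i _ => hw2 i
  have hVnn : 0 ≤ ∏ j : Fin l, v j := Finset.prod_nonneg fun j _ => hv1 j
  rw [e1, e2, ← Complex.ofReal_mul]
  constructor
  · exact Complex.ofReal_im _
  · rw [Complex.ofReal_re]
    exact mul_nonneg hWnn hVnn
end
end

section
/- Let $r \geq 3$ be odd, $q = e^{2\pi i/r}$, and let $n_r = (r-1)/2$ if $r \equiv 1 \pmod 4$ and $n_r = (r-3)/2$ if $r \equiv 3 \pmod 4$. Suppose $m, m' \in I_r$ are such that the triple $(n_r, m, m')$ is $r$-admissible. Then the product of quantum factorials $\left[\tfrac{n_r+m-m'}{2}\right]! \left[\tfrac{n_r+m'-m}{2}\right]! \left[\tfrac{m+m'-n_r}{2}\right]!$ is a positive real number. -/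
open scoped Real
open Complex Finset

noncomputable section

lemma exp_sub_exp (a : ℝ) :
    Complex.exp ((a : ℂ) * Complex.I) - Complex.exp (-((a : ℂ) * Complex.I)) =
      2 * Real.sin a * Complex.I := by
  rw [Complex.exp_mul_I, ← neg_mul, Complex.exp_mul_I]
  simp [Complex.cos_neg, Complex.sin_neg, ← Complex.ofReal_sin]
  ring

lemma qint_eq (r : ℕ) (hr : 0 < r) (n : ℤ) :
    qint r n = ((Real.sin (2 * Real.pi * n / r) / Real.sin (2 * Real.pi / r) : ℝ) : ℂ) := by
  have hr' : (r : ℂ) ≠ 0 := by exact_mod_cast hr.ne'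
  have hz : (2 * Real.pi * Complex.I / (r:ℂ)) = ((2 * Real.pi / r : ℝ) : ℂ) * Complex.I := by
    push_cast; field_simp
  unfold qint
  rw [hz, ← Complex.exp_int_mul, ← Complex.exp_int_mul, ← Complex.exp_neg]
  have h1 : (n : ℂ) * (((2 * Real.pi / r : ℝ)) * Complex.I) =
      ((2 * Real.pi * n / r : ℝ) : ℂ) * Complex.I := by push_cast; field_simp
  have h2 : ((-n : ℤ) : ℂ) * (((2 * Real.pi / r : ℝ)) * Complex.I) =
      -(((2 * Real.pi * n / r : ℝ) : ℂ) * Complex.I) := by push_cast; ring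
  have key : ∀ x y : ℂ, 2 * x * Complex.I / (2 * y * Complex.I) = x / y := by
    intro x y
    rw [show (2:ℂ) * x * Complex.I = x * (2 * Complex.I) by ring,
      show (2:ℂ) * y * Complex.I = y * (2 * Complex.I) by ring,
      mul_div_mul_right _ _ (by simp [Complex.I_ne_zero] : (2:ℂ) * Complex.I ≠ 0)]
  rw [h1, h2, exp_sub_exp, exp_sub_exp, key, Complex.ofReal_div]

lemma qfact_pos (r N : ℕ) (hr : 3 ≤ r) (hN : 2 * N < r) :
    ∃ x : ℝ, 0 < x ∧ qfact r N = (x : ℂ) := by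
  refine ⟨∏ k ∈ Finset.Icc 1 N, Real.sin (2 * Real.pi * k / r) / Real.sin (2 * Real.pi / r),
    ?_, ?_⟩
  · have hrpos : (0:ℝ) < r := by positivity
    have h3r : (3:ℝ) ≤ r := by exact_mod_cast hr
    have hsb : 0 < Real.sin (2 * Real.pi / r) := by
      apply Real.sin_pos_of_pos_of_lt_pi
      · positivity
      · rw [div_lt_iff₀ hrpos]
        nlinarith [Real.pi_pos, h3r]
    apply Finset.prod_pos
    intro k hk
    simp only [Finset.mem_Icc] at hk
    have hk1 : (1:ℝ) ≤ k := by exact_mod_cast hk.1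
    have hk2 : 2 * (k:ℝ) < r := by
      have : 2 * k < r := by omega
      exact_mod_cast this
    apply div_pos _ hsb
    apply Real.sin_pos_of_pos_of_lt_pi
    · positivity
    · rw [div_lt_iff₀ hrpos]; nlinarith [Real.pi_pos]
  · unfold qfact
    rw [Complex.ofReal_prod]
    exact Finset.prod_congr rfl fun k _ => by
      rw [qint_eq r (by omega) k]; norm_num

theorem numerator_positive (r : ℕ) (hr : 3 ≤ r) (hodd : Odd r) (m m' : ℕ)
    (hadm : AdmissibleTriple r (nr r) m m') :
    (qfact r ((nr r + m - m') / 2) * qfact r ((nr r + m' - m) / 2) *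
      qfact r ((m + m' - nr r) / 2)).im = 0 ∧
    0 < (qfact r ((nr r + m - m') / 2) * qfact r ((nr r + m' - m) / 2) *
      qfact r ((m + m' - nr r) / 2)).re := by
  have hmod : r % 2 = 1 := Nat.odd_iff.mp hodd
  have hn : nr r = (r - 1) / 2 ∨ nr r = (r - 3) / 2 := by
    unfold nr; split
    exacts [Or.inl rfl, Or.inr rfl]
  obtain ⟨h1, h2, h3, h4, h5, h6, h7, h8⟩ := hadm
  have b1 : 2 * ((nr r + m - m') / 2) < r := by omega
  have b2 : 2 * ((nr r + m' - m) / 2) < r := by omega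
  have b3 : 2 * ((m + m' - nr r) / 2) < r := by omega
  obtain ⟨x, hx, hxe⟩ := qfact_pos r _ hr b1
  obtain ⟨y, hy, hye⟩ := qfact_pos r _ hr b2
  obtain ⟨z, hz, hze⟩ := qfact_pos r _ hr b3
  rw [hxe, hye, hze, ← Complex.ofReal_mul, ← Complex.ofReal_mul]
  constructor
  · exact Complex.ofReal_im _
  · rw [Complex.ofReal_re]; positivity
end
end

section
/- Let $r \geq 3$ be odd, $q = e^{2\pi i/r}$, and let $n_r = (r-1)/2$ if $r \equiv 1 \pmod 4$ and $n_r = (r-3)/2$ if $r \equiv 3 \pmod 4$. Suppose $m \in I_r$ is such that the triple $(n_r, m, m)$ is $r$-admissible. Then $\Delta(n_r, m, m)^4$ is a positive real number; equivalently, $(\sqrt{-1})^{-(2n_r+4m)}\,\Delta(n_r,m,m)^4 > 0$. -/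
open scoped Real
open Complex Finset

noncomputable section

lemma conj_q (r : ℕ) :
    (starRingEnd ℂ) (Complex.exp (2 * Real.pi * Complex.I / r)) =
      (Complex.exp (2 * Real.pi * Complex.I / r))⁻¹ := by
  rw [← Complex.exp_conj, ← Complex.exp_neg]
  congr 1
  simp [map_div₀, Complex.conj_I, map_ofNat]
  ring

lemma qint_conj (r : ℕ) (n : ℤ) : (starRingEnd ℂ) (qint r n) = qint r n := by
  unfold qint
  set q := Complex.exp (2 * Real.pi * Complex.I / r) with hq
  rw [map_div₀, map_sub, map_sub, map_zpow₀, map_zpow₀, conj_q, map_inv₀, conj_q, inv_inv,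
    inv_zpow, ← zpow_neg, inv_zpow, ← zpow_neg, neg_neg]
  rw [show q ^ (-n) - q ^ n = -(q ^ n - q ^ (-n)) by ring,
    show q⁻¹ - q = -(q - q⁻¹) by ring, neg_div_neg_eq]

lemma qfact_conj (r N : ℕ) : (starRingEnd ℂ) (qfact r N) = qfact r N := by
  unfold qfact
  rw [map_prod]
  exact Finset.prod_congr rfl fun k _ => qint_conj r k

lemma qpow_eq_one_iff (r : ℕ) (hr : 0 < r) (j : ℤ) :
    Complex.exp (2 * Real.pi * Complex.I / r) ^ j = 1 ↔ (r : ℤ) ∣ j := by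
  rw [← Complex.exp_int_mul, Complex.exp_eq_one_iff]
  have hr' : (r : ℂ) ≠ 0 := Nat.cast_ne_zero.mpr hr.ne'
  have hpi : (Real.pi : ℂ) ≠ 0 := Complex.ofReal_ne_zero.mpr Real.pi_ne_zero
  constructor
  · rintro ⟨n, hn⟩
    field_simp at hn
    have h' := mul_right_cancel₀ (mul_ne_zero (mul_ne_zero two_ne_zero hpi) Complex.I_ne_zero)
      (by push_cast; linear_combination (2 * Real.pi * Complex.I) * hn :
        (j : ℂ) * (2 * Real.pi * Complex.I) = (n * r : ℤ) * (2 * Real.pi * Complex.I))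
    have h'' : j = n * r := by exact_mod_cast h'
    exact ⟨n, by rw [h'', mul_comm]⟩
  · rintro ⟨n, rfl⟩
    exact ⟨n, by push_cast; field_simp⟩

lemma qint_ne_zero (r : ℕ) (hr : 3 ≤ r) (hodd : Odd r) (k : ℕ) (hk1 : 1 ≤ k)
    (hk2 : k ≤ r - 1) : qint r (k : ℤ) ≠ 0 := by
  unfold qint
  set q := Complex.exp (2 * Real.pi * Complex.I / r) with hq
  have hq0 : q ≠ 0 := Complex.exp_ne_zero _
  have hr0 : 0 < r := by omega
  have hr2 : r % 2 = 1 := Nat.odd_iff.mp hodd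
  apply div_ne_zero
  · intro h
    have h2 : q ^ (2 * (k : ℤ)) = 1 := by
      have : q ^ (k : ℤ) = q ^ (-(k : ℤ)) := sub_eq_zero.mp h
      calc q ^ (2 * (k : ℤ)) = q ^ (k : ℤ) * q ^ (k : ℤ) := by rw [← zpow_add₀ hq0]; ring_nf
        _ = q ^ (k : ℤ) * q ^ (-(k : ℤ)) := by rw [← this]
        _ = 1 := by rw [← zpow_add₀ hq0]; simp
    have hdvd : (r : ℤ) ∣ 2 * (k : ℤ) := (qpow_eq_one_iff r hr0 _).mp h2
    have hd : (r : ℕ) ∣ 2 * k := by exact_mod_cast hdvd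
    have hcop : Nat.Coprime r 2 := by
      exact Odd.coprime_two_right hodd
    have hdk : r ∣ k := hcop.dvd_of_dvd_mul_left hd
    have := Nat.le_of_dvd (by omega) hdk
    omega
  · intro h
    have h2 : q ^ (2 : ℤ) = 1 := by
      have h1 : q = q⁻¹ := sub_eq_zero.mp h
      calc q ^ (2 : ℤ) = q * q := by rw [zpow_two]
        _ = q * q⁻¹ := by rw [← h1]
        _ = 1 := mul_inv_cancel₀ hq0
    have hdvd : (r : ℤ) ∣ 2 := (qpow_eq_one_iff r hr0 _).mp h2
    have hd2 : (r : ℕ) ∣ 2 := by exact_mod_cast hdvd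
    have := Nat.le_of_dvd (by norm_num) hd2
    omega

lemma qfact_ne_zero (r : ℕ) (hr : 3 ≤ r) (hodd : Odd r) (N : ℕ) (hN : N ≤ r - 1) :
    qfact r N ≠ 0 := by
  unfold qfact
  exact Finset.prod_ne_zero_iff.mpr fun k hk => by
    rw [Finset.mem_Icc] at hk
    exact qint_ne_zero r hr hodd k hk.1 (hk.2.trans hN)

theorem qdelta_pow_four_positive (r : ℕ) (hr : 3 ≤ r) (hodd : Odd r) (m : ℕ)
    (hadm : AdmissibleTriple r (nr r) m m) :
    ((qdelta r (nr r) m m ^ 4).im = 0 ∧ 0 < (qdelta r (nr r) m m ^ 4).re) ∧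
    ((Complex.I ^ (-(2 * (nr r : ℤ) + 4 * m)) * qdelta r (nr r) m m ^ 4).im = 0 ∧
      0 < (Complex.I ^ (-(2 * (nr r : ℤ) + 4 * m)) * qdelta r (nr r) m m ^ 4).re) := by
  have hm : m ≤ r - 2 := hadm.2.1
  have hn2 : nr r ≤ r - 2 := hadm.1
  have hsum : nr r + m + m ≤ 2 * (r - 2) := hadm.2.2.2.2.1
  have h2 : r % 2 = 1 := Nat.odd_iff.mp hodd
  have hnr_even : Even (nr r) := by
    rw [Nat.even_iff]; unfold nr; split <;> omega
  set X : ℂ := qfact r ((nr r + m - m) / 2) * qfact r ((nr r + m - m) / 2) *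
      qfact r ((m + m - nr r) / 2) / qfact r ((nr r + m + m) / 2 + 1) with hX
  have hqd : qdelta r (nr r) m m = X ^ (1 / 2 : ℂ) := rfl
  have hX0 : X ≠ 0 := by
    refine div_ne_zero (mul_ne_zero (mul_ne_zero ?_ ?_) ?_) ?_ <;>
      exact qfact_ne_zero r hr hodd _ (by omega)
  have hXconj : (starRingEnd ℂ) X = X := by
    simp only [hX, map_div₀, map_mul, qfact_conj]
  obtain ⟨x, hx⟩ : ∃ x : ℝ, X = (x : ℂ) := ⟨X.re, (Complex.conj_eq_iff_re.mp hXconj).symm⟩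
  have hx0 : x ≠ 0 := fun h => hX0 (by rw [hx, h]; simp)
  have hD4 : qdelta r (nr r) m m ^ 4 = ((x ^ 2 : ℝ) : ℂ) := by
    rw [hqd, show (4 : ℕ) = 2 * 2 from rfl, pow_mul,
      show (1 / 2 : ℂ) = ((2 : ℕ) : ℂ)⁻¹ by norm_num,
      Complex.cpow_nat_inv_pow X two_ne_zero, hx]
    push_cast
    ring
  have hI : Complex.I ^ (-(2 * (nr r : ℤ) + 4 * (m : ℤ))) = 1 := by
    obtain ⟨t, ht⟩ := hnr_even
    have he : (-(2 * (nr r : ℤ) + 4 * (m : ℤ))) = 4 * (-((t : ℤ) + m)) := by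
      have : (nr r : ℤ) = t + t := by exact_mod_cast ht
      rw [this]; ring
    rw [he, zpow_mul, show ((4 : ℤ)) = ((4 : ℕ) : ℤ) from rfl, zpow_natCast]
    norm_num
  have hpos : 0 < x ^ 2 := pow_two_pos_of_ne_zero hx0
  refine ⟨⟨by rw [hD4]; exact Complex.ofReal_im _,
    by rw [hD4, Complex.ofReal_re]; exact hpos⟩, ?_⟩
  rw [hI, one_mul, hD4]
  exact ⟨Complex.ofReal_im _, by rw [Complex.ofReal_re]; exact hpos⟩
end
end
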